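/- Consider a finite weakly acyclic strategic-form game whose set S̄ of payoff-dominant pure Nash equilibria (profiles α* ∈ A_NE with u_i(α*) ≥ u_i(α') for every player i and every profile α') is nonempty. Assume: (i) from every action profile α ∉ A_NE there is a best-reply improvement path starting at α and ending in S̄; and (ii) every α* ∈ A_NE ∖ S̄ is a better reply of some player to some action profile. Then there exists an S̄-graph g* on A, all of whose edges are one-step transitions, such that every edge of g* starting at a profile not in A_NE is a better-reply edge; consequently the edges of g* that are not better-reply edges are exactly those starting at profiles in A_NE ∖ S̄, and their number is |A_NE ∖ S̄|. -/

import Mathlib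

attribute [local instance] Classical.propDecidable

/-- `β` is a better reply of player `i` to `α`. -/
def BetterReply {I : Type*} {A : I → Type*} (u : (i : I) → ((j : I) → A j) → ℝ)
    (i : I) (α β : (j : I) → A j) : Prop :=
  (∀ j, j ≠ i → β j = α j) ∧ u i α < u i β

/-- A best reply: a better reply achieving the deviating player's maximal utility
among all better replies. -/
def BestReply {I : Type*} {A : I → Type*} (u : (i : I) → ((j : I) → A j) → ℝ)
    (i : I) (α β : (j : I) → A j) : Prop :=
  BetterReply u i α β ∧ ∀ γ, BetterReply u i α γ → u i γ ≤ u i β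

/-- A pure Nash equilibrium: no player has a better reply. -/
def IsNashEq {I : Type*} {A : I → Type*} (u : (i : I) → ((j : I) → A j) → ℝ)
    (α : (j : I) → A j) : Prop :=
  ∀ i β, ¬ BetterReply u i α β

/-- A payoff-dominant pure Nash equilibrium: a Nash equilibrium whose payoff to each
player is at least that player's payoff at every other profile. -/
def PayoffDominantEq {I : Type*} {A : I → Type*} (u : (i : I) → ((j : I) → A j) → ℝ)
    (α : (j : I) → A j) : Prop :=
  IsNashEq u α ∧ ∀ (i : I) (α' : (j : I) → A j), u i α' ≤ u i α

/-- `β` differs from `α` in the action of exactly one player. -/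
def OneStep {I : Type*} {A : I → Type*} (α β : (j : I) → A j) : Prop :=
  ∃ i, β i ≠ α i ∧ ∀ j, j ≠ i → β j = α j

/-!
Take a shortest best-reply path from every non-equilibrium profile into `S̄` and let `g*` follow
its first edge; the length of a shortest path strictly decreases along `g*`, so every such
profile is led into `S̄`. A Nash equilibrium `α* ∉ S̄` is a better reply to some profile `γ`;
`γ` is then not an equilibrium, so sending `α*` back to `γ` keeps `g*` an `S̄`-graph.
-/

section ShortestPaths

variable {α : Type*} (r : α → α → Prop) (s : α → Prop)

def ReachesInSteps : ℕ → α → Prop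
  | 0, a => s a
  | n + 1, a => ∃ b, r a b ∧ ReachesInSteps n b

variable {r s}

theorem Relation.ReflTransGen.exists_reachesInSteps {a b : α}
    (h : Relation.ReflTransGen r a b) (hb : s b) : ∃ n, ReachesInSteps r s n a := by
  induction h using Relation.ReflTransGen.head_induction_on with
  | refl => exact ⟨0, hb⟩
  | head hac _ ih =>
    obtain ⟨n, hn⟩ := ih
    exact ⟨n + 1, _, hac, hn⟩

variable (r s) in
theorem exists_successor_reachesInSteps_lt :
    ∃ f : α → α, ∀ a n, ¬ s a → ReachesInSteps r s n a →
      r a (f a) ∧ ∃ m < n, ReachesInSteps r s m (f a) := by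
  have : ∀ a, ∃ b, ∀ n, ¬ s a → ReachesInSteps r s n a →
      r a b ∧ ∃ m < n, ReachesInSteps r s m b := by
    intro a
    by_cases hreach : ∃ n, ReachesInSteps r s n a
    · obtain ⟨d, hd, hmin⟩ : ∃ d, ReachesInSteps r s d a ∧
          ∀ n, ReachesInSteps r s n a → d ≤ n :=
        ⟨Nat.find hreach, Nat.find_spec hreach, fun _ => Nat.find_min' hreach⟩
      cases d with
      | zero => exact ⟨a, fun _ hs _ => absurd hd hs⟩
      | succ d =>
        obtain ⟨b, hab, hb⟩ := hd
        exact ⟨b, fun n _ hn => ⟨hab, d, hmin n hn, hb⟩⟩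
    · exact ⟨a, fun n _ hn => absurd ⟨n, hn⟩ hreach⟩
  choose f hf using this
  exact ⟨f, hf⟩

theorem exists_iterate_of_reachesInSteps {g : α → α}
    (hg : ∀ a n, ¬ s a → ReachesInSteps r s n a → ∃ m < n, ReachesInSteps r s m (g a))
    (n : ℕ) : ∀ a, ReachesInSteps r s n a → ∃ k, s (g^[k] a) := by
  induction n using Nat.strong_induction_on with
  | _ n ih =>
    intro a ha
    by_cases hs : s a
    · exact ⟨0, hs⟩
    · obtain ⟨m, hm, hgm⟩ := hg a n hs ha
      obtain ⟨k, hk⟩ := ih m hm (g a) hgm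
      exact ⟨k + 1, hk⟩

end ShortestPaths

section Games

variable {I : Type*} {A : I → Type*} {u : (i : I) → ((j : I) → A j) → ℝ} {i : I}
  {α β : (j : I) → A j}

theorem BetterReply.oneStep (h : BetterReply u i α β) : OneStep α β := by
  refine ⟨i, fun hi => h.2.ne ?_, h.1⟩
  congr 1
  funext j
  by_cases hj : j = i
  · subst hj; exact hi.symm
  · exact (h.1 j hj).symm

theorem OneStep.symm (h : OneStep α β) : OneStep β α :=
  let ⟨i, hi, hother⟩ := h
  ⟨i, Ne.symm hi, fun j hj => (hother j hj).symm⟩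

theorem OneStep.ne (h : OneStep α β) : β ≠ α :=
  let ⟨i, hi, _⟩ := h
  fun hβα => hi (congrFun hβα i)

theorem BetterReply.not_isNashEq (h : BetterReply u i α β) : ¬ IsNashEq u α :=
  fun hN => hN i β h

theorem exists_betterReply_graph
    (hbest : ∀ α : (j : I) → A j, ¬ IsNashEq u α →
      ∃ β, PayoffDominantEq u β ∧ Relation.ReflTransGen
        (fun x y => ∃ i, BestReply u i x y) α β)
    (hin : ∀ α : (j : I) → A j, IsNashEq u α → ¬ PayoffDominantEq u α →
      ∃ γ i, BetterReply u i γ α) :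
    ∃ g : ((j : I) → A j) → ((j : I) → A j),
      (∀ β, ¬ IsNashEq u β → ∃ i, BetterReply u i β (g β)) ∧
      (∀ β, IsNashEq u β → ¬ PayoffDominantEq u β → ∃ i, BetterReply u i (g β) β) ∧
      ∀ β, ∃ n, PayoffDominantEq u (g^[n] β) := by
  set r := fun x y => ∃ i, BestReply u i x y
  have reaches (β) (hβ : ¬ IsNashEq u β) : ∃ n, ReachesInSteps r (PayoffDominantEq u) n β :=
    let ⟨_, hPD, hpath⟩ := hbest β hβ
    hpath.exists_reachesInSteps hPD
  obtain ⟨f, hf⟩ := exists_successor_reachesInSteps_lt r (PayoffDominantEq u)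
  choose pred hpred using hin
  let g β := if h : IsNashEq u β ∧ ¬ PayoffDominantEq u β then pred β h.1 h.2 else f β
  have g_of_not_isNashEq (β) (hβ : ¬ IsNashEq u β) : g β = f β := dif_neg (by tauto)
  have g_of_isNashEq (β) (hN : IsNashEq u β) (hPD : ¬ PayoffDominantEq u β) :
      g β = pred β hN hPD := dif_pos ⟨hN, hPD⟩
  have g_shortens (β n) (hPD : ¬ PayoffDominantEq u β)
      (hβ : ReachesInSteps r (PayoffDominantEq u) n β) :
      ∃ m < n, ReachesInSteps r (PayoffDominantEq u) m (g β) := by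
    obtain ⟨⟨i, hi⟩, hm⟩ := hf β n hPD hβ
    rwa [g_of_not_isNashEq β hi.1.not_isNashEq]
  have rooted_of_not_isNashEq (β) (hβ : ¬ IsNashEq u β) :
      ∃ n, PayoffDominantEq u (g^[n] β) :=
    let ⟨n, hn⟩ := reaches β hβ
    exists_iterate_of_reachesInSteps g_shortens n β hn
  refine ⟨g, fun β hβ => ?_, fun β hN hPD => ?_, fun β => ?_⟩
  · obtain ⟨n, hn⟩ := reaches β hβ
    obtain ⟨⟨i, hi⟩, -⟩ := hf β n (fun hPD => hβ hPD.1) hn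
    exact ⟨i, g_of_not_isNashEq β hβ ▸ hi.1⟩
  · rw [g_of_isNashEq β hN hPD]
    exact hpred β hN hPD
  · by_cases hPD : PayoffDominantEq u β
    · exact ⟨0, hPD⟩
    by_cases hN : IsNashEq u β
    · obtain ⟨i, hi⟩ := hpred β hN hPD
      obtain ⟨n, hn⟩ := rooted_of_not_isNashEq _ hi.not_isNashEq
      exact ⟨n + 1, by rwa [Function.iterate_succ_apply, g_of_isNashEq β hN hPD]⟩
    · exact rooted_of_not_isNashEq β hN

end Games

theorem stmt17_general {I : Type*} [Fintype I] [DecidableEq I] {A : I → Type*}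
    [∀ i, Fintype (A i)]
    (u : (i : I) → ((j : I) → A j) → ℝ)
    (hbest : ∀ α : (j : I) → A j, ¬ IsNashEq u α →
      ∃ β, PayoffDominantEq u β ∧ Relation.ReflTransGen
        (fun x y => ∃ i, BestReply u i x y) α β)
    (hin : ∀ α : (j : I) → A j, IsNashEq u α → ¬ PayoffDominantEq u α →
      ∃ γ i, BetterReply u i γ α) :
    ∃ g : ((j : I) → A j) → ((j : I) → A j),
      (∀ β, ¬ PayoffDominantEq u β →
        (g β ≠ β ∧ OneStep β (g β) ∧ ∃ n : ℕ, PayoffDominantEq u (g^[n] β))) ∧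
      (∀ β, ¬ IsNashEq u β → ∃ i, BetterReply u i β (g β)) ∧
      (Finset.univ.filter
          (fun β => ¬ PayoffDominantEq u β ∧ ¬ ∃ i, BetterReply u i β (g β)) =
        Finset.univ.filter
          (fun β => IsNashEq u β ∧ ¬ PayoffDominantEq u β)) ∧
      (Finset.univ.filter
          (fun β => ¬ PayoffDominantEq u β ∧ ¬ ∃ i, BetterReply u i β (g β))).card =
        (Finset.univ.filter
          (fun β => IsNashEq u β ∧ ¬ PayoffDominantEq u β)).card := by
  obtain ⟨g, hforward, hbackward, hrooted⟩ := exists_betterReply_graph hbest hin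
  have honeStep (β) (hPD : ¬ PayoffDominantEq u β) : OneStep β (g β) := by
    by_cases hN : IsNashEq u β
    · obtain ⟨i, hi⟩ := hbackward β hN hPD
      exact hi.oneStep.symm
    · obtain ⟨i, hi⟩ := hforward β hN
      exact hi.oneStep
  have hfilter : Finset.univ.filter
        (fun β => ¬ PayoffDominantEq u β ∧ ¬ ∃ i, BetterReply u i β (g β)) =
      Finset.univ.filter (fun β => IsNashEq u β ∧ ¬ PayoffDominantEq u β) := by
    refine Finset.filter_congr fun β _ => ⟨fun ⟨hPD, hno⟩ => ⟨?_, hPD⟩, fun ⟨hN, hPD⟩ => ?_⟩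
    · by_contra hN
      exact hno (hforward β hN)
    · exact ⟨hPD, fun ⟨i, hi⟩ => hi.not_isNashEq hN⟩
  exact ⟨g, fun β hPD => ⟨(honeStep β hPD).ne, honeStep β hPD, hrooted β⟩, hforward, hfilter,
    by rw [hfilter]⟩

/-- In a finite weakly acyclic game with a nonempty set `S̄` of payoff-dominant Nash
equilibria, if every non-Nash profile admits a best-reply improvement path into `S̄`
and every Nash equilibrium outside `S̄` is a better reply of some player to some
profile, then there is a one-step `S̄`-graph `g*` whose edges starting outside `A_NE`
are all better-reply edges; its non-better-reply edges are exactly those starting at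
profiles in `A_NE ∖ S̄`, and their number is `|A_NE ∖ S̄|`. -/
theorem stmt17 {I : Type*} [Fintype I] [DecidableEq I] {A : I → Type*}
    [∀ i, Fintype (A i)] [∀ i, Nonempty (A i)]
    (u : (i : I) → ((j : I) → A j) → ℝ)
    (hwa : ∀ α : (j : I) → A j, ∃ β, Relation.ReflTransGen
        (fun x y => ∃ i, BetterReply u i x y) α β ∧ IsNashEq u β)
    (hne : ∃ α, PayoffDominantEq u α)
    (hbest : ∀ α : (j : I) → A j, ¬ IsNashEq u α →
      ∃ β, PayoffDominantEq u β ∧ Relation.ReflTransGen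
        (fun x y => ∃ i, BestReply u i x y) α β)
    (hin : ∀ α : (j : I) → A j, IsNashEq u α → ¬ PayoffDominantEq u α →
      ∃ γ i, BetterReply u i γ α) :
    ∃ g : ((j : I) → A j) → ((j : I) → A j),
      (∀ β, ¬ PayoffDominantEq u β →
        (g β ≠ β ∧ OneStep β (g β) ∧ ∃ n : ℕ, PayoffDominantEq u (g^[n] β))) ∧
      (∀ β, ¬ IsNashEq u β → ∃ i, BetterReply u i β (g β)) ∧
      (Finset.univ.filter
          (fun β => ¬ PayoffDominantEq u β ∧ ¬ ∃ i, BetterReply u i β (g β)) =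
        Finset.univ.filter
          (fun β => IsNashEq u β ∧ ¬ PayoffDominantEq u β)) ∧
      (Finset.univ.filter
          (fun β => ¬ PayoffDominantEq u β ∧ ¬ ∃ i, BetterReply u i β (g β))).card =
        (Finset.univ.filter
          (fun β => IsNashEq u β ∧ ¬ PayoffDominantEq u β)).card :=
  stmt17_general u hbest hin
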